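/- arXiv:1604.07694 — 3 statements merged into one kernel-verified Lean document; each statement's English description precedes it below -/
import Mathlib

section
/- Flow interchange lemma: Let B be a proper, lower semicontinuous functional on (X,d) possessing a λ-flow S^B for some λ ∈ ℝ, and let A be another proper, lower semicontinuous functional on (X,d) such that Dom(A) ⊆ Dom(B). Let τ > 0 and w̃ ∈ X be such that the functional u ↦ (1/(2τ)) d(u, w̃)² + A(u) is proper, and let w be a minimizer of this functional on X. Then B(w) + τ·D^B A(w) + (λ/2) d(w, w̃)² ≤ B(w̃), where D^B A(w) := limsup_{h↓0} (A(w) − A(S^B_h(w)))/h is the dissipation of A along the flow S^B. -/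
/-!
Testing the minimality of `w` against `S h w` gives
`τ (A w - A (S h w)) / h ≤ (d(S h w, w̃)² - d(w, w̃)²) / (2h)` for every `h > 0`.
Taking the `limsup` as `h ↓ 0` bounds `τ · D^B A(w)` by the Dini derivative in the
evolution variational inequality at `s = 0`, tested with `w̃`.
-/

open Filter Set

namespace EReal

theorem sub_le_coe_sub_of_coe_add_le {a b : EReal} {c c' : ℝ} (h : (c : EReal) + a ≤ c' + b) :
    a - b ≤ ((c' - c : ℝ) : EReal) := by
  refine sub_le_of_le_add ((addLECancellable_coe c).add_le_add_iff_left.mp ?_)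
  calc (c : EReal) + a ≤ c' + b := h
    _ = c + (((c' - c : ℝ) : EReal) + b) := by
      rw [← add_assoc, ← coe_add, add_sub_cancel]

end EReal

section Minimizer

variable {X : Type*} (d : X → X → ℝ) (A : X → EReal) {τ : ℝ} {wt w : X}

theorem dissipation_quotient_le_of_minimizer (hτ : 0 < τ)
    (hmin : ∀ u, (((1 / (2 * τ)) * (d w wt) ^ 2 : ℝ) : EReal) + A w ≤
      (((1 / (2 * τ)) * (d u wt) ^ 2 : ℝ) : EReal) + A u)
    (u : X) {h : ℝ} (hh : 0 < h) :
    (τ : EReal) * ((A w - A u) * ((1 / h : ℝ) : EReal)) ≤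
      ((1 / 2 : ℝ) : EReal) * (((d u wt ^ 2 - d w wt ^ 2) / h : ℝ) : EReal) := by
  have hdiff := EReal.sub_le_coe_sub_of_coe_add_le (hmin u)
  calc (τ : EReal) * ((A w - A u) * ((1 / h : ℝ) : EReal))
      ≤ τ * (((1 / (2 * τ) * d u wt ^ 2 - 1 / (2 * τ) * d w wt ^ 2 : ℝ) : EReal) *
          ((1 / h : ℝ) : EReal)) := by
        gcongr
    _ = ((1 / 2 : ℝ) : EReal) * (((d u wt ^ 2 - d w wt ^ 2) / h : ℝ) : EReal) := by
        rw [← EReal.coe_mul, ← EReal.coe_mul, ← EReal.coe_mul]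
        congr 1
        field_simp

theorem coe_mul_limsup_dissipation_le_of_minimizer (hτ : 0 < τ)
    (hmin : ∀ u, (((1 / (2 * τ)) * (d w wt) ^ 2 : ℝ) : EReal) + A w ≤
      (((1 / (2 * τ)) * (d u wt) ^ 2 : ℝ) : EReal) + A u)
    (γ : ℝ → X) :
    (τ : EReal) * limsup (fun h : ℝ => (A w - A (γ h)) * ((1 / h : ℝ) : EReal))
        (nhdsWithin 0 (Ioi 0)) ≤
      ((1 / 2 : ℝ) : EReal) *
        limsup (fun h : ℝ => (((d (γ h) wt ^ 2 - d w wt ^ 2) / h : ℝ) : EReal))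
          (nhdsWithin 0 (Ioi 0)) := by
  rw [← EReal.limsup_const_mul_of_nonneg_of_ne_top (by exact_mod_cast hτ.le)
      (EReal.coe_ne_top _),
    ← EReal.limsup_const_mul_of_nonneg_of_ne_top (by norm_num) (EReal.coe_ne_top _)]
  refine limsup_le_limsup ?_
  filter_upwards [self_mem_nhdsWithin] with h hh
  exact dissipation_quotient_le_of_minimizer d A hτ hmin (γ h) hh

end Minimizer

theorem flow_interchange_general {X : Type*} (d : X → X → ℝ)
    (A B : X → EReal)
    (hdom : ∀ x, A x ≠ ⊤ → B x ≠ ⊤)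
    (lam : ℝ) (S : ℝ → X → X)
    (hS0 : ∀ w, S 0 w = w)
    -- the evolution variational inequality for the `lam`-flow `S` of `B`,
    -- with the upper right Dini derivative expressed as a one-sided `limsup`
    (hEVI : ∀ w w', B w ≠ ⊤ → B w' ≠ ⊤ → ∀ s : ℝ, 0 ≤ s →
      ((1 / 2 : ℝ) : EReal) *
        (limsup (fun h : ℝ =>
            ((((d (S (s + h) w) w') ^ 2 - (d (S s w) w') ^ 2) / h : ℝ) : EReal))
          (nhdsWithin 0 (Set.Ioi 0)))
        + (((lam / 2) * (d (S s w) w') ^ 2 : ℝ) : EReal) + B (S s w) ≤ B w')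
    (τ : ℝ) (hτ : 0 < τ) (wt : X)
    (hproper : ∃ u, (((1 / (2 * τ)) * (d u wt) ^ 2 : ℝ) : EReal) + A u ≠ ⊤)
    (w : X)
    (hmin : ∀ u, (((1 / (2 * τ)) * (d w wt) ^ 2 : ℝ) : EReal) + A w ≤
      (((1 / (2 * τ)) * (d u wt) ^ 2 : ℝ) : EReal) + A u) :
    B w + ((τ : ℝ) : EReal) *
        (limsup (fun h : ℝ => (A w - A (S h w)) * (((1 / h : ℝ)) : EReal))
          (nhdsWithin 0 (Set.Ioi 0)))
      + (((lam / 2) * (d w wt) ^ 2 : ℝ) : EReal) ≤ B wt := by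
  obtain ⟨u, hu⟩ := hproper
  have hAw : A w ≠ ⊤ := fun hAw ↦ hu <| top_le_iff.mp <|
    (EReal.add_top_of_ne_bot (EReal.coe_ne_bot _)).symm.trans_le (hAw ▸ hmin u)
  by_cases hBwt : B wt = ⊤
  · exact hBwt ▸ le_top
  have hEVI0 := hEVI w wt (hdom w hAw) hBwt 0 le_rfl
  simp only [zero_add, hS0] at hEVI0
  have hdiss := coe_mul_limsup_dissipation_le_of_minimizer d A hτ hmin (S · w)
  calc B w + (τ : EReal) * limsup (fun h : ℝ => (A w - A (S h w)) * ((1 / h : ℝ) : EReal))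
          (nhdsWithin 0 (Ioi 0)) + (((lam / 2) * d w wt ^ 2 : ℝ) : EReal)
      ≤ B w + ((1 / 2 : ℝ) : EReal) *
          limsup (fun h : ℝ => (((d (S h w) wt ^ 2 - d w wt ^ 2) / h : ℝ) : EReal))
            (nhdsWithin 0 (Ioi 0)) + (((lam / 2) * d w wt ^ 2 : ℝ) : EReal) := by
        gcongr
    _ = _ := by ac_rfl
    _ ≤ B wt := hEVI0

/-- **Flow interchange lemma** (Matthes–McCann–Savaré), on an (extended) pseudometric
space `(X, d)`.  `B` is a proper, lower semicontinuous functional possessing a `lam`-flow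
`S`, `A` is another proper lower semicontinuous functional with `Dom A ⊆ Dom B`.  If `w`
minimizes `u ↦ 1/(2τ) d(u,w̃)² + A(u)` (a proper functional), then
`B(w) + τ·D^B A(w) + (lam/2) d(w,w̃)² ≤ B(w̃)`, where `D^B A(w)` is the dissipation of `A`
along the flow `S`. -/
theorem flow_interchange {X : Type*} (d : X → X → ℝ)
    (hd_nonneg : ∀ x y, 0 ≤ d x y)
    (hd_refl : ∀ x, d x x = 0)
    (hd_symm : ∀ x y, d x y = d y x)
    (hd_tri : ∀ x y z, d x z ≤ d x y + d y z)
    (A B : X → EReal)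
    (hA_proper : ∃ x, A x ≠ ⊤) (hA_nebot : ∀ x, A x ≠ ⊥)
    (hB_proper : ∃ x, B x ≠ ⊤) (hB_nebot : ∀ x, B x ≠ ⊥)
    (hA_lsc : ∀ (x : X) (xs : ℕ → X), Tendsto (fun n => d (xs n) x) atTop (nhds 0) →
      A x ≤ liminf (fun n => A (xs n)) atTop)
    (hB_lsc : ∀ (x : X) (xs : ℕ → X), Tendsto (fun n => d (xs n) x) atTop (nhds 0) →
      B x ≤ liminf (fun n => B (xs n)) atTop)
    (hdom : ∀ x, A x ≠ ⊤ → B x ≠ ⊤)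
    (lam : ℝ) (S : ℝ → X → X)
    (hS0 : ∀ w, S 0 w = w)
    (hSsemi : ∀ s t : ℝ, 0 ≤ s → 0 ≤ t → ∀ w, S (s + t) w = S s (S t w))
    (hScont : ∀ (w : X) (s : ℝ), 0 ≤ s →
      Tendsto (fun t => d (S t w) (S s w)) (nhdsWithin s (Set.Ici 0)) (nhds 0))
    -- the evolution variational inequality for the `lam`-flow `S` of `B`,
    -- with the upper right Dini derivative expressed as a one-sided `limsup`
    (hEVI : ∀ w w', B w ≠ ⊤ → B w' ≠ ⊤ → ∀ s : ℝ, 0 ≤ s →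
      ((1 / 2 : ℝ) : EReal) *
        (limsup (fun h : ℝ =>
            ((((d (S (s + h) w) w') ^ 2 - (d (S s w) w') ^ 2) / h : ℝ) : EReal))
          (nhdsWithin 0 (Set.Ioi 0)))
        + (((lam / 2) * (d (S s w) w') ^ 2 : ℝ) : EReal) + B (S s w) ≤ B w')
    (hmono : ∀ (w : X) (s t : ℝ), 0 ≤ s → s ≤ t → B (S t w) ≤ B (S s w))
    (τ : ℝ) (hτ : 0 < τ) (wt : X)
    (hproper : ∃ u, (((1 / (2 * τ)) * (d u wt) ^ 2 : ℝ) : EReal) + A u ≠ ⊤)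
    (w : X)
    (hmin : ∀ u, (((1 / (2 * τ)) * (d w wt) ^ 2 : ℝ) : EReal) + A w ≤
      (((1 / (2 * τ)) * (d u wt) ^ 2 : ℝ) : EReal) + A u) :
    B w + ((τ : ℝ) : EReal) *
        (limsup (fun h : ℝ => (A w - A (S h w)) * (((1 / h : ℝ)) : EReal))
          (nhdsWithin 0 (Set.Ioi 0)))
      + (((lam / 2) * (d w wt) ^ 2 : ℝ) : EReal) ≤ B wt :=
  flow_interchange_general d A B hdom lam S hS0 hEVI τ hτ wt hproper w hmin
end

section
/- Bound on the heat entropy: Let d ≥ 1 and let h : ℝ_{≥0} → ℝ satisfy |h(z)| ≤ H₁ z^{α₁} + H₂ z^{α₂+1} for all z ≥ 0, where H₁, H₂ ≥ 0, α₁ ∈ (d/(d+2), 1) and α₂ ∈ [0,1]. Then there exists a constant C ≥ 0, depending only on d, H₁, H₂, α₁, α₂, such that for every u ∈ 𝐗 ∩ L²(ℝ^d): ∫_{ℝ^d} |h(u(x))| dx ≤ C(‖u‖²_{L²} + M₂(u) + 1) < ∞. -/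
open MeasureTheory
open scoped ENNReal

/-!
By Young's inequality, `z ^ α₁ ≤ (1 + |x|²) z + (1 + |x|²) ^ (-α₁ / (1 - α₁))` at every point `x`,
and `z ^ (α₂ + 1) ≤ z + z²`. Take `z = u(x)` and integrate: `(1 + |x|²) u` gives mass plus second
moment, `z + z²` gives mass plus `‖u‖²_{L²}`, and the weight `(1 + |x|²) ^ (-α₁ / (1 - α₁))` is
integrable over `ℝ^d` exactly because `2α₁ / (1 - α₁) > d`, i.e. `α₁ > d / (d + 2)`.
-/

theorem rpow_le_mul_add_rpow_neg {z a α : ℝ} (hz : 0 ≤ z) (ha : 0 < a) (hα₀ : 0 ≤ α)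
    (hα₁ : α < 1) : z ^ α ≤ a * z + a ^ (-(α / (1 - α))) := by
  have h1α : 0 < 1 - α := by linarith
  set c := a ^ (-(α / (1 - α)))
  have hc : 0 ≤ c := Real.rpow_nonneg ha.le _
  have hc_pow : c ^ (1 - α) = (a ^ α)⁻¹ := by
    rw [← Real.rpow_mul ha.le, neg_mul, div_mul_cancel₀ _ h1α.ne', Real.rpow_neg ha.le]
  have young := Real.geom_mean_le_arith_mean2_weighted hα₀ h1α.le (mul_nonneg ha.le hz) hc
    (add_sub_cancel α 1)
  have hlhs : (a * z) ^ α * c ^ (1 - α) = z ^ α := by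
    rw [Real.mul_rpow ha.le hz, hc_pow, mul_right_comm,
      mul_inv_cancel₀ (Real.rpow_pos_of_pos ha α).ne', one_mul]
  rw [hlhs] at young
  nlinarith [mul_nonneg ha.le hz]

theorem rpow_add_one_le_add_sq {z α : ℝ} (hz : 0 ≤ z) (hα₀ : 0 ≤ α) (hα₁ : α ≤ 1) :
    z ^ (α + 1) ≤ z + z ^ 2 := by
  have hpow : z ^ α ≤ 1 + z := by
    rcases le_total z 1 with hz1 | h1z
    · linarith [Real.rpow_le_one hz hz1 hα₀]
    · linarith [Real.rpow_le_self_of_one_le h1z hα₁]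
  calc z ^ (α + 1) = z * z ^ α := by
        rw [Real.rpow_add' hz (by linarith), Real.rpow_one, mul_comm]
    _ ≤ z * (1 + z) := mul_le_mul_of_nonneg_left hpow hz
    _ = z + z ^ 2 := by ring

section

variable {Ω : Type*} [MeasurableSpace Ω] {μ : Measure Ω}

theorem lintegral_ofReal_abs_comp_le {h : ℝ → ℝ} {H₁ H₂ α₁ α₂ : ℝ} (hH₁ : 0 ≤ H₁)
    (hH₂ : 0 ≤ H₂) (hα₁ : 0 ≤ α₁ ∧ α₁ < 1) (hα₂ : 0 ≤ α₂ ∧ α₂ ≤ 1)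
    (hh : ∀ z, 0 ≤ z → |h z| ≤ H₁ * z ^ α₁ + H₂ * z ^ (α₂ + 1))
    {u V : Ω → ℝ} (hV : ∀ x, 0 ≤ V x) (hu : Integrable u μ) (hu₀ : ∀ᵐ x ∂μ, 0 ≤ u x)
    (hVu : Integrable (fun x ↦ V x * u x) μ) (hu_sq : Integrable (fun x ↦ u x ^ 2) μ)
    (hW : Integrable (fun x ↦ (1 + V x) ^ (-(α₁ / (1 - α₁)))) μ) :
    ∫⁻ x, ENNReal.ofReal |h (u x)| ∂μ ≤
      ENNReal.ofReal (H₁ * ((∫ x, u x ∂μ) + (∫ x, V x * u x ∂μ) +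
          ∫ x, (1 + V x) ^ (-(α₁ / (1 - α₁))) ∂μ) +
        H₂ * ((∫ x, u x ∂μ) + ∫ x, u x ^ 2 ∂μ)) := by
  set W := fun x ↦ (1 + V x) ^ (-(α₁ / (1 - α₁)))
  set g := fun x ↦ H₁ * (u x + V x * u x + W x) + H₂ * (u x + u x ^ 2)
  have hVu' : Integrable (fun x ↦ u x + V x * u x) μ := hu.add hVu
  have hA : Integrable (fun x ↦ u x + V x * u x + W x) μ := hVu'.add hW
  have hB : Integrable (fun x ↦ u x + u x ^ 2) μ := hu.add hu_sq
  have hg_int : Integrable g μ := (hA.const_mul H₁).add (hB.const_mul H₂)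
  have hg_nonneg : ∀ᵐ x ∂μ, 0 ≤ g x := by
    filter_upwards [hu₀] with x hx
    have hWx : 0 ≤ W x := Real.rpow_nonneg (by linarith [hV x]) _
    have hVux : 0 ≤ V x * u x := mul_nonneg (hV x) hx
    positivity
  have hg_bound : ∀ᵐ x ∂μ, |h (u x)| ≤ g x := by
    filter_upwards [hu₀] with x hx
    have h₁ := rpow_le_mul_add_rpow_neg hx (by linarith [hV x] : 0 < 1 + V x) hα₁.1 hα₁.2
    have h₂ := rpow_add_one_le_add_sq hx hα₂.1 hα₂.2
    calc |h (u x)| ≤ H₁ * u x ^ α₁ + H₂ * u x ^ (α₂ + 1) := hh _ hx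
      _ ≤ g x := by
        simp only [g, W]
        gcongr
        linarith
  have hg_integral : ∫ x, g x ∂μ = H₁ * ((∫ x, u x ∂μ) + (∫ x, V x * u x ∂μ) + ∫ x, W x ∂μ) +
      H₂ * ((∫ x, u x ∂μ) + ∫ x, u x ^ 2 ∂μ) := by
    simp only [g]
    rw [integral_add (hA.const_mul H₁) (hB.const_mul H₂), integral_const_mul,
      integral_const_mul, integral_add hVu' hW,
      integral_add hu hVu, integral_add hu hu_sq]
  calc ∫⁻ x, ENNReal.ofReal |h (u x)| ∂μ ≤ ∫⁻ x, ENNReal.ofReal (g x) ∂μ :=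
        lintegral_mono_ae (hg_bound.mono fun x hx ↦ ENNReal.ofReal_le_ofReal hx)
    _ = _ := by rw [← ofReal_integral_eq_lintegral_ofReal hg_int hg_nonneg, hg_integral]

end

theorem exponent_lt_of_div_add_two_lt {d α : ℝ} (hd : 0 ≤ d) (hα : d / (d + 2) < α)
    (hα₁ : α < 1) : d < 2 * (α / (1 - α)) := by
  have h1α : 0 < 1 - α := by linarith
  have : d < α * (d + 2) := (div_lt_iff₀ (by positivity)).mp hα
  rw [← mul_div_assoc, lt_div_iff₀ h1α]
  linarith

theorem heat_entropy_bound_general (d : ℕ) (H₁ H₂ α₁ α₂ : ℝ)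
    (hH₁ : 0 ≤ H₁) (hH₂ : 0 ≤ H₂)
    (hα₁ : (d : ℝ) / (d + 2) < α₁ ∧ α₁ < 1) (hα₂ : 0 ≤ α₂ ∧ α₂ ≤ 1) :
    ∃ C : ℝ, 0 ≤ C ∧ ∀ h : ℝ → ℝ,
      (∀ z : ℝ, 0 ≤ z → |h z| ≤ H₁ * z ^ α₁ + H₂ * z ^ (α₂ + 1)) →
      ∀ u : EuclideanSpace ℝ (Fin d) → ℝ,
        Integrable u →
        (∀ᵐ x ∂(volume : Measure (EuclideanSpace ℝ (Fin d))), 0 ≤ u x) →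
        (∫ x, u x) = 1 →
        Integrable (fun x : EuclideanSpace ℝ (Fin d) => ‖x‖ ^ 2 * u x) →
        MemLp u 2 →
        (∫⁻ x, ENNReal.ofReal |h (u x)|) ≤
          ENNReal.ofReal (C * ((∫ x, u x ^ 2) + (∫ x, ‖x‖ ^ 2 * u x) + 1)) := by
  have hα₁₀ : 0 ≤ α₁ := le_trans (by positivity) hα₁.1.le
  have hW : Integrable fun x : EuclideanSpace ℝ (Fin d) ↦ (1 + ‖x‖ ^ 2) ^ (-(α₁ / (1 - α₁))) := by
    have hdim : (Module.finrank ℝ (EuclideanSpace ℝ (Fin d)) : ℝ) < 2 * (α₁ / (1 - α₁)) := by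
      rw [finrank_euclideanSpace_fin]
      exact exponent_lt_of_div_add_two_lt d.cast_nonneg hα₁.1 hα₁.2
    simpa [neg_div, mul_div_cancel_left₀] using
      integrable_rpow_neg_one_add_norm_sq (μ := volume) hdim
  set I := ∫ x : EuclideanSpace ℝ (Fin d), (1 + ‖x‖ ^ 2) ^ (-(α₁ / (1 - α₁)))
  have hI : 0 ≤ I := integral_nonneg fun x ↦ Real.rpow_nonneg (by positivity) _
  refine ⟨H₁ * (1 + I) + H₂, by positivity, fun h hh u hu hu₀ hmass hM hL2 ↦ ?_⟩
  have hS : 0 ≤ ∫ x, u x ^ 2 := integral_nonneg fun x ↦ sq_nonneg _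
  have hM₀ : 0 ≤ ∫ x, ‖x‖ ^ 2 * u x :=
    integral_nonneg_of_ae (hu₀.mono fun x hx ↦ mul_nonneg (by positivity) hx)
  refine (lintegral_ofReal_abs_comp_le hH₁ hH₂ ⟨hα₁₀, hα₁.2⟩ hα₂ hh (fun x ↦ sq_nonneg ‖x‖)
    hu hu₀ hM hL2.integrable_sq hW).trans (ENNReal.ofReal_le_ofReal ?_)
  rw [hmass]
  nlinarith [mul_nonneg hH₁ (mul_nonneg hI hS), mul_nonneg hH₁ (mul_nonneg hI hM₀),
    mul_nonneg hH₁ hS, mul_nonneg hH₂ hM₀]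

/-- **Bound on the heat entropy.**  If `|h(z)| ≤ H₁ z^{α₁} + H₂ z^{α₂+1}` with
`α₁ ∈ (d/(d+2), 1)` and `α₂ ∈ [0,1]`, then there is a constant `C ≥ 0` depending only on
`d, H₁, H₂, α₁, α₂` such that `∫ |h(u)| ≤ C(‖u‖²_{L²} + M₂(u) + 1) < ∞` for every
`u ∈ 𝐗 ∩ L²(ℝ^d)`. -/
theorem heat_entropy_bound (d : ℕ) (hd : 1 ≤ d) (H₁ H₂ α₁ α₂ : ℝ)
    (hH₁ : 0 ≤ H₁) (hH₂ : 0 ≤ H₂)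
    (hα₁ : (d : ℝ) / (d + 2) < α₁ ∧ α₁ < 1) (hα₂ : 0 ≤ α₂ ∧ α₂ ≤ 1) :
    ∃ C : ℝ, 0 ≤ C ∧ ∀ h : ℝ → ℝ,
      (∀ z : ℝ, 0 ≤ z → |h z| ≤ H₁ * z ^ α₁ + H₂ * z ^ (α₂ + 1)) →
      ∀ u : EuclideanSpace ℝ (Fin d) → ℝ,
        Integrable u →
        (∀ᵐ x ∂(volume : Measure (EuclideanSpace ℝ (Fin d))), 0 ≤ u x) →
        (∫ x, u x) = 1 →
        Integrable (fun x : EuclideanSpace ℝ (Fin d) => ‖x‖ ^ 2 * u x) →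
        MemLp u 2 →
        (∫⁻ x, ENNReal.ofReal |h (u x)|) ≤
          ENNReal.ofReal (C * ((∫ x, u x ^ 2) + (∫ x, ‖x‖ ^ 2 * u x) + 1)) :=
  heat_entropy_bound_general d H₁ H₂ α₁ α₂ hH₁ hH₂ hα₁ hα₂
end

section
/- Integration-by-parts identity for the fourth-order dissipation: Let d ≥ 1, f ∈ C²(ℝ^d × ℝ), and u ∈ C_c^∞(ℝ^d). Then −∫_{ℝ^d} [−div(∇_p f(∇u(x), u(x))) + ∂_z f(∇u(x), u(x))]·Δu(x) dx = ∫_{ℝ^d} Σ_{i=1}^d (∂_{x_i}∇u(x), ∂_{x_i}u(x))^T · ∇²_{(p,z)} f(∇u(x), u(x)) · (∂_{x_i}∇u(x), ∂_{x_i}u(x)) dx, where for each i the vector (∂_{x_i}∇u, ∂_{x_i}u) ∈ ℝ^{d+1} has the partial derivatives of the gradient in its first d components and the partial derivative of u in its last component, and ∇²_{(p,z)} f denotes the (d+1)×(d+1) Hessian of f with respect to the joint variable (p,z). -/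
open MeasureTheory

/-- The `i`-th partial derivative of `g : ℝ^n → ℝ`. -/
noncomputable def pd {n : ℕ} (g : EuclideanSpace ℝ (Fin n) → ℝ) (i : Fin n)
    (x : EuclideanSpace ℝ (Fin n)) : ℝ :=
  fderiv ℝ g x (EuclideanSpace.single i 1)

/-- The gradient vector of `g : ℝ^d → ℝ`, with components the partial derivatives. -/
noncomputable def gradVec {d : ℕ} (g : EuclideanSpace ℝ (Fin d) → ℝ)
    (x : EuclideanSpace ℝ (Fin d)) : EuclideanSpace ℝ (Fin d) :=
  (WithLp.equiv 2 (Fin d → ℝ)).symm fun j => pd g j x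

/-- The vector `(p, z) ∈ ℝ^{d+1}` obtained by appending `z ∈ ℝ` to `p ∈ ℝ^d`. -/
noncomputable def snocE {d : ℕ} (p : EuclideanSpace ℝ (Fin d)) (z : ℝ) :
    EuclideanSpace ℝ (Fin (d + 1)) :=
  (WithLp.equiv 2 (Fin (d + 1) → ℝ)).symm (Fin.snoc (WithLp.equiv 2 (Fin d → ℝ) p) z)

/-- The Hessian bilinear form of `f : ℝ^n → ℝ` at `q` in the directions `a`, `b`. -/
noncomputable def hess {n : ℕ} (f : EuclideanSpace ℝ (Fin n) → ℝ)
    (q a b : EuclideanSpace ℝ (Fin n)) : ℝ :=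
  fderiv ℝ (fun q' => fderiv ℝ f q' b) q a

namespace IBPaux

lemma contDiff_pd_top {n : ℕ} {g : EuclideanSpace ℝ (Fin n) → ℝ} (hg : ContDiff ℝ (⊤ : ℕ∞) g)
    (i : Fin n) : ContDiff ℝ (⊤ : ℕ∞) (pd g i) :=
  (hg.fderiv_right (by simp)).clm_apply contDiff_const

lemma continuous_pd_one {n : ℕ} {g : EuclideanSpace ℝ (Fin n) → ℝ} (hg : ContDiff ℝ 1 g)
    (i : Fin n) : Continuous (pd g i) :=
  (((hg.fderiv_right (by norm_num)).clm_apply contDiff_const) : ContDiff ℝ 0 _).continuous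

lemma hcs_pd {n : ℕ} {g : EuclideanSpace ℝ (Fin n) → ℝ} (hg : HasCompactSupport g)
    (i : Fin n) : HasCompactSupport (pd g i) :=
  hg.fderiv_apply ℝ (EuclideanSpace.single i 1)

lemma contDiff_gradVec {d : ℕ} {g : EuclideanSpace ℝ (Fin d) → ℝ} (hg : ContDiff ℝ (⊤ : ℕ∞) g) :
    ContDiff ℝ (⊤ : ℕ∞) (gradVec g) := by
  rw [contDiff_euclidean]
  intro j
  exact contDiff_pd_top hg j

lemma gradVec_apply {d : ℕ} (g : EuclideanSpace ℝ (Fin d) → ℝ) (x) (j : Fin d) :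
    gradVec g x j = pd g j x := rfl

lemma snocE_castSucc {d : ℕ} (p : EuclideanSpace ℝ (Fin d)) (z : ℝ) (j : Fin d) :
    snocE p z (Fin.castSucc j) = p j := by
  simp [snocE]

lemma snocE_last {d : ℕ} (p : EuclideanSpace ℝ (Fin d)) (z : ℝ) :
    snocE p z (Fin.last d) = z := by
  simp [snocE]

lemma contDiff_snoc_comp {d : ℕ} {E : Type*} [NormedAddCommGroup E] [NormedSpace ℝ E]
    {g : E → EuclideanSpace ℝ (Fin d)} {h : E → ℝ} {ν : WithTop ℕ∞}
    (hg : ContDiff ℝ ν g) (hh : ContDiff ℝ ν h) :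
    ContDiff ℝ ν (fun x => snocE (g x) (h x)) := by
  rw [contDiff_euclidean]
  intro k
  induction k using Fin.lastCases with
  | last => simpa [snocE_last] using hh
  | cast j =>
      have := contDiff_euclidean.1 hg j
      simpa [snocE_castSucc] using this

lemma fderiv_clm_apply_const {E F : Type*} [NormedAddCommGroup E] [NormedSpace ℝ E]
    [NormedAddCommGroup F] [NormedSpace ℝ F]
    {c : E → (E →L[ℝ] F)} {x : E} (hc : DifferentiableAt ℝ c x) (v s : E) :
    fderiv ℝ (fun y => c y v) x s = fderiv ℝ c x s v := by
  have h : (fun y => c y v) = fun y => (c y) ((fun _ => v) y) := rfl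
  rw [h, fderiv_clm_apply hc (differentiableAt_const v)]
  simp

lemma pd_comm {n : ℕ} {g : EuclideanSpace ℝ (Fin n) → ℝ} (hg : ContDiff ℝ (⊤ : ℕ∞) g)
    (i j : Fin n) (x : EuclideanSpace ℝ (Fin n)) :
    pd (pd g i) j x = pd (pd g j) i x := by
  have hd : DifferentiableAt ℝ (fderiv ℝ g) x :=
    ((hg.fderiv_right ((WithTop.coe_le_coe.mpr le_top)) : ContDiff ℝ 1 (fderiv ℝ g)).differentiable one_ne_zero) x
  have hsymm : IsSymmSndFDerivAt ℝ g x := hg.contDiffAt.isSymmSndFDerivAt (by rw [minSmoothness_of_isRCLikeNormedField]; exact WithTop.coe_le_coe.mpr le_top)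
  show fderiv ℝ (fun y => fderiv ℝ g y (EuclideanSpace.single i 1)) x (EuclideanSpace.single j 1)
      = fderiv ℝ (fun y => fderiv ℝ g y (EuclideanSpace.single j 1)) x (EuclideanSpace.single i 1)
  rw [fderiv_clm_apply_const hd, fderiv_clm_apply_const hd]
  exact hsymm _ _

lemma euclid_decomp {n : ℕ} (L : EuclideanSpace ℝ (Fin n) →L[ℝ] ℝ)
    (v : EuclideanSpace ℝ (Fin n)) :
    L v = ∑ k, v k * L (EuclideanSpace.single k 1) := by
  have hv : v = ∑ k, v k • EuclideanSpace.single k (1:ℝ) := by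
    have := (EuclideanSpace.basisFun (Fin n) ℝ).sum_repr v
    simp only [EuclideanSpace.basisFun_apply, EuclideanSpace.basisFun_repr] at this
    exact this.symm
  conv_lhs => rw [hv]
  rw [map_sum]
  simp [smul_eq_mul]

lemma integrable_mul_cs {d : ℕ} {a b : EuclideanSpace ℝ (Fin d) → ℝ}
    (ha : Continuous a) (hb : Continuous b) (hcs : HasCompactSupport b) :
    Integrable (fun x => a x * b x) :=
  (ha.mul hb).integrable_of_hasCompactSupport (hcs.mul_left)

lemma ibp {d : ℕ} {φ ψ : EuclideanSpace ℝ (Fin d) → ℝ} (i : Fin d)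
    (hφ : ContDiff ℝ 1 φ) (hψ : ContDiff ℝ (⊤ : ℕ∞) ψ) (hψc : HasCompactSupport ψ) :
    ∫ x, pd φ i x * ψ x = -∫ x, φ x * pd ψ i x := by
  have h1 : Integrable (fun x => fderiv ℝ φ x (EuclideanSpace.single i 1) * ψ x) :=
    integrable_mul_cs (continuous_pd_one hφ i) (hψ.continuous) hψc
  have h2 : Integrable (fun x => φ x * fderiv ℝ ψ x (EuclideanSpace.single i 1)) :=
    integrable_mul_cs hφ.continuous (continuous_pd_one (hψ.of_le (by simp)) i) (hcs_pd hψc i)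
  have h3 : Integrable (fun x => φ x * ψ x) :=
    integrable_mul_cs hφ.continuous hψ.continuous hψc
  have key := integral_mul_fderiv_eq_neg_fderiv_mul_of_integrable
    (μ := volume) (v := EuclideanSpace.single i 1) h1 h2 h3
    (fun x _ => hφ.differentiable one_ne_zero x) (fun x _ => hψ.differentiable (by simp) x)
  show ∫ x, fderiv ℝ φ x (EuclideanSpace.single i 1) * ψ x
      = -∫ x, φ x * fderiv ℝ ψ x (EuclideanSpace.single i 1)
  rw [key, neg_neg]

lemma hasFDerivAt_w {d : ℕ} {u : EuclideanSpace ℝ (Fin d) → ℝ} (hu : ContDiff ℝ (⊤ : ℕ∞) u)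
    (x : EuclideanSpace ℝ (Fin d)) :
    ∃ W : EuclideanSpace ℝ (Fin d) →L[ℝ] EuclideanSpace ℝ (Fin (d+1)),
      HasFDerivAt (fun y => snocE (gradVec u y) (u y)) W x ∧
      ∀ i : Fin d, W (EuclideanSpace.single i 1) = snocE (gradVec (pd u i) x) (pd u i x) := by
  classical
  set L : EuclideanSpace ℝ (Fin d) →L[ℝ] (Fin (d+1) → ℝ) :=
    ContinuousLinearMap.pi
      (fun k => Fin.lastCases (fderiv ℝ u x) (fun j => fderiv ℝ (pd u j) x) k) with hL
  have hP : HasFDerivAt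
      (fun y => (Fin.snoc (fun j => pd u j y) (u y) : Fin (d+1) → ℝ)) L x := by
    apply hasFDerivAt_pi''
    intro k
    induction k using Fin.lastCases with
    | last =>
        simp only [hL, ContinuousLinearMap.proj_pi, Fin.lastCases_last, Fin.snoc_last]
        exact ((hu.differentiable (by simp)) x).hasFDerivAt
    | cast j =>
        simp only [hL, ContinuousLinearMap.proj_pi, Fin.lastCases_castSucc, Fin.snoc_castSucc]
        exact (((contDiff_pd_top hu j).differentiable (by simp)) x).hasFDerivAt
  set e : (Fin (d+1) → ℝ) ≃L[ℝ] EuclideanSpace ℝ (Fin (d+1)) :=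
    (PiLp.continuousLinearEquiv 2 ℝ (fun _ : Fin (d+1) => ℝ)).symm with he
  refine ⟨(e : (Fin (d+1) → ℝ) →L[ℝ] EuclideanSpace ℝ (Fin (d+1))).comp L, ?_, ?_⟩
  · exact ((e : (Fin (d+1) → ℝ) →L[ℝ] EuclideanSpace ℝ (Fin (d+1))).hasFDerivAt).comp x hP
  · intro i
    ext k
    rcases Fin.eq_castSucc_or_eq_last k with ⟨j, rfl⟩ | rfl
    · simp only [hL, he, ContinuousLinearMap.coe_comp', Function.comp_apply,
        ContinuousLinearEquiv.coe_coe, PiLp.continuousLinearEquiv_symm_apply,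
        PiLp.toLp_apply, ContinuousLinearMap.pi_apply, Fin.lastCases_castSucc,
        snocE_castSucc, gradVec_apply]
      exact pd_comm hu j i x
    · simp only [hL, he, ContinuousLinearMap.coe_comp', Function.comp_apply,
        ContinuousLinearEquiv.coe_coe, PiLp.continuousLinearEquiv_symm_apply,
        PiLp.toLp_apply, ContinuousLinearMap.pi_apply, Fin.lastCases_last,
        snocE_last]
      rfl

lemma pd_F {d : ℕ} {f : EuclideanSpace ℝ (Fin (d+1)) → ℝ} (hf : ContDiff ℝ 2 f)
    {u : EuclideanSpace ℝ (Fin d) → ℝ} (hu : ContDiff ℝ (⊤ : ℕ∞) u)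
    (k : Fin (d+1)) (i : Fin d) (x : EuclideanSpace ℝ (Fin d)) :
    pd (fun y => fderiv ℝ f (snocE (gradVec u y) (u y)) (EuclideanSpace.single k 1)) i x
      = fderiv ℝ (fderiv ℝ f) (snocE (gradVec u x) (u x))
          (snocE (gradVec (pd u i) x) (pd u i x)) (EuclideanSpace.single k 1) := by
  obtain ⟨W, hW, hWi⟩ := hasFDerivAt_w hu x
  have hw : ContDiff ℝ (⊤ : ℕ∞) (fun y => snocE (gradVec u y) (u y)) :=
    contDiff_snoc_comp (contDiff_gradVec hu) hu
  have hdf : Differentiable ℝ (fderiv ℝ f) :=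
    (hf.fderiv_right (by norm_num) : ContDiff ℝ 1 _).differentiable one_ne_zero
  have hwd : DifferentiableAt ℝ (fun y => snocE (gradVec u y) (u y)) x :=
    hw.differentiable (by simp) x
  have h1 : HasFDerivAt (fderiv ℝ f ∘ fun y => snocE (gradVec u y) (u y))
      ((fderiv ℝ (fderiv ℝ f) (snocE (gradVec u x) (u x))).comp W) x :=
    ((hdf _).hasFDerivAt).comp x hW
  have happ0 := ((ContinuousLinearMap.apply ℝ ℝ (EuclideanSpace.single k 1)).hasFDerivAt).comp x h1
  have happ : HasFDerivAt
      (fun y => fderiv ℝ f (snocE (gradVec u y) (u y)) (EuclideanSpace.single k 1))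
      ((ContinuousLinearMap.apply ℝ ℝ (EuclideanSpace.single k 1)).comp
        ((fderiv ℝ (fderiv ℝ f) (snocE (gradVec u x) (u x))).comp W)) x := happ0
  show fderiv ℝ (fun y => fderiv ℝ f (snocE (gradVec u y) (u y))
      (EuclideanSpace.single k 1)) x (EuclideanSpace.single i 1) = _
  rw [happ.fderiv]
  simp [hWi i]

lemma hess_eq {n : ℕ} {f : EuclideanSpace ℝ (Fin n) → ℝ} (hf : ContDiff ℝ 2 f)
    (q a b : EuclideanSpace ℝ (Fin n)) :
    hess f q a b = fderiv ℝ (fderiv ℝ f) q a b := by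
  have hdf : DifferentiableAt ℝ (fderiv ℝ f) q :=
    ((hf.fderiv_right (by norm_num) : ContDiff ℝ 1 _).differentiable one_ne_zero) q
  exact fderiv_clm_apply_const hdf b a

lemma integrable_mul_cs' {d : ℕ} {a b : EuclideanSpace ℝ (Fin d) → ℝ}
    (ha : Continuous a) (hcs : HasCompactSupport a) (hb : Continuous b) :
    Integrable (fun x => a x * b x) :=
  (ha.mul hb).integrable_of_hasCompactSupport (hcs.mul_right)

lemma key1 {d : ℕ} {F : EuclideanSpace ℝ (Fin d) → ℝ} (hF : ContDiff ℝ 1 F)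
    {u : EuclideanSpace ℝ (Fin d) → ℝ} (hu : ContDiff ℝ (⊤ : ℕ∞) u) (husupp : HasCompactSupport u)
    (j i : Fin d) :
    ∫ x, pd F j x * pd (pd u i) i x = ∫ x, pd F i x * pd (pd u i) j x := by
  have hpdu : ∀ a : Fin d, ContDiff ℝ (⊤ : ℕ∞) (pd u a) := fun a => contDiff_pd_top hu a
  have hpdcs : ∀ a : Fin d, HasCompactSupport (pd u a) := fun a => hcs_pd husupp a
  rw [ibp j hF (contDiff_pd_top (hpdu i) i) (hcs_pd (hpdcs i) i)]
  have einner : pd (pd u i) j = pd (pd u j) i := funext fun z => pd_comm hu i j z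
  have e1 : pd (pd (pd u i) i) j = pd (pd (pd u j) i) i := by
    funext y
    rw [pd_comm (hpdu i) i j y, einner]
  rw [e1, einner]
  exact (ibp i hF (contDiff_pd_top (hpdu j) i) (hcs_pd (hpdcs j) i)).symm

lemma key2 {d : ℕ} {F : EuclideanSpace ℝ (Fin d) → ℝ} (hF : ContDiff ℝ 1 F)
    {u : EuclideanSpace ℝ (Fin d) → ℝ} (hu : ContDiff ℝ (⊤ : ℕ∞) u) (husupp : HasCompactSupport u)
    (i : Fin d) :
    ∫ x, F x * pd (pd u i) i x = -∫ x, pd F i x * pd u i x := by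
  have h := ibp i hF (contDiff_pd_top hu i) (hcs_pd husupp i)
  linarith

lemma lhs_transform {d : ℕ} (F : Fin (d+1) → EuclideanSpace ℝ (Fin d) → ℝ)
    (hF : ∀ k, ContDiff ℝ 1 (F k))
    {u : EuclideanSpace ℝ (Fin d) → ℝ} (hu : ContDiff ℝ (⊤ : ℕ∞) u) (husupp : HasCompactSupport u) :
    -∫ x, ((-(∑ j : Fin d, pd (F (Fin.castSucc j)) j x) + F (Fin.last d) x)
        * (∑ i : Fin d, pd (pd u i) i x))
      = ∑ i : Fin d, ((∑ j : Fin d, ∫ x, pd (pd u i) j x * pd (F (Fin.castSucc j)) i x)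
          + ∫ x, pd u i x * pd (F (Fin.last d)) i x) := by
  have hpdu : ∀ a : Fin d, ContDiff ℝ (⊤ : ℕ∞) (pd u a) := fun a => contDiff_pd_top hu a
  have hpdcs : ∀ a : Fin d, HasCompactSupport (pd u a) := fun a => hcs_pd husupp a
  have hcont : ∀ (k : Fin (d+1)) (i : Fin d), Continuous (pd (F k) i) :=
    fun k i => continuous_pd_one (hF k) i
  have hδc : ∀ i : Fin d, Continuous (pd (pd u i) i) :=
    fun i => (contDiff_pd_top (hpdu i) i).continuous
  have hδcs : ∀ i : Fin d, HasCompactSupport (pd (pd u i) i) :=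
    fun i => hcs_pd (hpdcs i) i
  have hScont : Continuous fun x => -(∑ j : Fin d, pd (F (Fin.castSucc j)) j x)
      + F (Fin.last d) x :=
    (Continuous.neg (continuous_finset_sum _ fun j _ => hcont _ j)).add (hF _).continuous
  rw [show (fun x => ((-(∑ j : Fin d, pd (F (Fin.castSucc j)) j x) + F (Fin.last d) x)
        * (∑ i : Fin d, pd (pd u i) i x)))
      = (fun x => ∑ i : Fin d, ((-(∑ j : Fin d, pd (F (Fin.castSucc j)) j x)
          + F (Fin.last d) x) * pd (pd u i) i x)) from funext fun x => Finset.mul_sum _ _ _]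
  rw [integral_finset_sum _ (fun i _ =>
    integrable_mul_cs hScont (hδc i) (hδcs i))]
  rw [← Finset.sum_neg_distrib]
  refine Finset.sum_congr rfl fun i _ => ?_
  have eint : ∀ x, ((-(∑ j : Fin d, pd (F (Fin.castSucc j)) j x) + F (Fin.last d) x)
        * pd (pd u i) i x)
      = (∑ j : Fin d, -(pd (F (Fin.castSucc j)) j x * pd (pd u i) i x))
        + F (Fin.last d) x * pd (pd u i) i x := by
    intro x
    rw [add_mul, neg_mul, Finset.sum_mul, ← Finset.sum_neg_distrib]
  simp only [eint]
  have hIneg : ∀ j : Fin d, Integrable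
      (fun x => -(pd (F (Fin.castSucc j)) j x * pd (pd u i) i x)) volume :=
    fun j => (integrable_mul_cs (hcont _ j) (hδc i) (hδcs i)).neg
  have hIS : Integrable
      (fun x => ∑ j : Fin d, -(pd (F (Fin.castSucc j)) j x * pd (pd u i) i x)) volume :=
    integrable_finset_sum _ (fun j _ => hIneg j)
  have hIT : Integrable (fun x => F (Fin.last d) x * pd (pd u i) i x) volume :=
    integrable_mul_cs (hF _).continuous (hδc i) (hδcs i)
  rw [integral_add hIS hIT]
  rw [integral_finset_sum _ (fun j _ => hIneg j)]
  simp only [integral_neg]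
  rw [neg_add, ← Finset.sum_neg_distrib]
  simp only [neg_neg]
  congr 1
  · refine Finset.sum_congr rfl fun j _ => ?_
    rw [key1 (hF _) hu husupp j i]
    rw [show (fun x => pd (F (Fin.castSucc j)) i x * pd (pd u i) j x)
        = fun x => pd (pd u i) j x * pd (F (Fin.castSucc j)) i x from
      funext fun x => mul_comm _ _]
  · rw [key2 (hF _) hu husupp i, neg_neg]
    rw [show (fun x => pd (F (Fin.last d)) i x * pd u i x)
        = fun x => pd u i x * pd (F (Fin.last d)) i x from
      funext fun x => mul_comm _ _]

lemma rhs_exchange {d : ℕ} (F : Fin (d+1) → EuclideanSpace ℝ (Fin d) → ℝ)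
    (hF : ∀ k, ContDiff ℝ 1 (F k))
    {u : EuclideanSpace ℝ (Fin d) → ℝ} (hu : ContDiff ℝ (⊤ : ℕ∞) u) (husupp : HasCompactSupport u) :
    ∫ x, ∑ i : Fin d, ((∑ j : Fin d, pd (pd u i) j x * pd (F (Fin.castSucc j)) i x)
        + pd u i x * pd (F (Fin.last d)) i x)
      = ∑ i : Fin d, ((∑ j : Fin d, ∫ x, pd (pd u i) j x * pd (F (Fin.castSucc j)) i x)
          + ∫ x, pd u i x * pd (F (Fin.last d)) i x) := by
  have hpdu : ∀ a : Fin d, ContDiff ℝ (⊤ : ℕ∞) (pd u a) := fun a => contDiff_pd_top hu a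
  have hpdcs : ∀ a : Fin d, HasCompactSupport (pd u a) := fun a => hcs_pd husupp a
  have hcont : ∀ (k : Fin (d+1)) (i : Fin d), Continuous (pd (F k) i) :=
    fun k i => continuous_pd_one (hF k) i
  have hIij : ∀ i j : Fin d,
      Integrable (fun x => pd (pd u i) j x * pd (F (Fin.castSucc j)) i x) volume :=
    fun i j => integrable_mul_cs' ((contDiff_pd_top (hpdu i) j).continuous)
      (hcs_pd (hpdcs i) j) (hcont _ i)
  have hIlast : ∀ i : Fin d,
      Integrable (fun x => pd u i x * pd (F (Fin.last d)) i x) volume :=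
    fun i => integrable_mul_cs' ((hpdu i).continuous) (hpdcs i) (hcont _ i)
  have hIsum : ∀ i : Fin d, Integrable
      (fun x => ∑ j : Fin d, pd (pd u i) j x * pd (F (Fin.castSucc j)) i x) volume :=
    fun i => integrable_finset_sum _ (fun j _ => hIij i j)
  have hIadd : ∀ i : Fin d, Integrable
      (fun x => (∑ j : Fin d, pd (pd u i) j x * pd (F (Fin.castSucc j)) i x)
        + pd u i x * pd (F (Fin.last d)) i x) volume :=
    fun i => (hIsum i).add (hIlast i)
  rw [integral_finset_sum _ (fun i _ => hIadd i)]
  refine Finset.sum_congr rfl fun i _ => ?_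
  rw [integral_add (hIsum i) (hIlast i), integral_finset_sum _ (fun j _ => hIij i j)]

lemma hess_point {d : ℕ} {f : EuclideanSpace ℝ (Fin (d+1)) → ℝ} (hf : ContDiff ℝ 2 f)
    {u : EuclideanSpace ℝ (Fin d) → ℝ} (hu : ContDiff ℝ (⊤ : ℕ∞) u) (i : Fin d)
    (x : EuclideanSpace ℝ (Fin d)) :
    hess f (snocE (gradVec u x) (u x)) (snocE (gradVec (pd u i) x) (pd u i x))
        (snocE (gradVec (pd u i) x) (pd u i x))
      = (∑ j : Fin d, pd (pd u i) j x
            * pd (fun y => fderiv ℝ f (snocE (gradVec u y) (u y))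
                (EuclideanSpace.single (Fin.castSucc j) 1)) i x)
        + pd u i x * pd (fun y => fderiv ℝ f (snocE (gradVec u y) (u y))
            (EuclideanSpace.single (Fin.last d) 1)) i x := by
  rw [hess_eq hf]
  rw [euclid_decomp (fderiv ℝ (fderiv ℝ f) (snocE (gradVec u x) (u x))
      (snocE (gradVec (pd u i) x) (pd u i x))) (snocE (gradVec (pd u i) x) (pd u i x))]
  rw [Fin.sum_univ_castSucc]
  congr 1
  · refine Finset.sum_congr rfl fun j _ => ?_
    rw [snocE_castSucc, gradVec_apply, ← pd_F hf hu]
  · rw [snocE_last, ← pd_F hf hu]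

end IBPaux

/-- **Integration-by-parts identity for the fourth-order dissipation.**  For
`f ∈ C²(ℝ^d × ℝ)` (written as a function on `ℝ^{d+1}`, the last coordinate being the
`z`-variable) and `u ∈ C_c^∞(ℝ^d)`:
`−∫ [−div(∇_p f(∇u,u)) + ∂_z f(∇u,u)]·Δu
  = ∫ Σ_i (∂_i∇u, ∂_i u)ᵀ · ∇²f(∇u,u) · (∂_i∇u, ∂_i u)`. -/
theorem fourth_order_integration_by_parts (d : ℕ) (hd : 1 ≤ d)
    (f : EuclideanSpace ℝ (Fin (d + 1)) → ℝ) (hf : ContDiff ℝ 2 f)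
    (u : EuclideanSpace ℝ (Fin d) → ℝ) (hu : ContDiff ℝ (⊤ : ℕ∞) u)
    (husupp : HasCompactSupport u) :
    -∫ x, ((-(∑ j : Fin d,
          pd (fun y => fderiv ℝ f (snocE (gradVec u y) (u y))
              (EuclideanSpace.single (Fin.castSucc j) 1)) j x)
        + fderiv ℝ f (snocE (gradVec u x) (u x)) (EuclideanSpace.single (Fin.last d) 1))
        * (∑ i : Fin d, pd (pd u i) i x))
      = ∫ x, ∑ i : Fin d,
          hess f (snocE (gradVec u x) (u x))
            (snocE (gradVec (pd u i) x) (pd u i x))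
            (snocE (gradVec (pd u i) x) (pd u i x)) := by
  have hw : ContDiff ℝ (⊤ : ℕ∞) (fun y => snocE (gradVec u y) (u y)) :=
    IBPaux.contDiff_snoc_comp (IBPaux.contDiff_gradVec hu) hu
  have hF : ∀ k : Fin (d+1), ContDiff ℝ 1
      (fun x => fderiv ℝ f (snocE (gradVec u x) (u x)) (EuclideanSpace.single k 1)) :=
    fun k => (((hf.fderiv_right (by norm_num)).comp (hw.of_le (by simp))).clm_apply contDiff_const)
  have h1 := IBPaux.lhs_transform
    (fun k x => fderiv ℝ f (snocE (gradVec u x) (u x)) (EuclideanSpace.single k 1)) hF hu husupp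
  have h2 := IBPaux.rhs_exchange
    (fun k x => fderiv ℝ f (snocE (gradVec u x) (u x)) (EuclideanSpace.single k 1)) hF hu husupp
  have h3 : (fun x => ∑ i : Fin d,
      hess f (snocE (gradVec u x) (u x)) (snocE (gradVec (pd u i) x) (pd u i x))
        (snocE (gradVec (pd u i) x) (pd u i x)))
      = fun x => ∑ i : Fin d, ((∑ j : Fin d, pd (pd u i) j x
            * pd (fun y => fderiv ℝ f (snocE (gradVec u y) (u y))
                (EuclideanSpace.single (Fin.castSucc j) 1)) i x)
        + pd u i x * pd (fun y => fderiv ℝ f (snocE (gradVec u y) (u y))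
            (EuclideanSpace.single (Fin.last d) 1)) i x) :=
    funext fun x => Finset.sum_congr rfl fun i _ => IBPaux.hess_point hf hu i x
  refine h1.trans ?_
  rw [h3]
  exact h2.symm
end
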